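/- Let (Θ, 𝒜) be a measurable space and (Λ, ℬ, μ) a σ-finite measure space with μ(Λ) > 0. If F : Θ × Λ → [0,∞] is measurable with respect to the product σ-algebra 𝒜 ⊗ ℬ, then there exists a countable family (M_n)_{n ∈ ℕ} ⊆ ℬ with 0 < μ(M_n) < ∞ for all n such that, setting f_n := 1_{M_n} / μ(M_n), one has ess sup_{λ ∈ Λ} F(θ, λ) = sup_{n ∈ ℕ} ∫_Λ F(θ, λ) · f_n(λ) dμ(λ) for every θ ∈ Θ. In particular, the map θ ↦ ess sup_{λ ∈ Λ} F(θ, λ) is 𝒜-measurable. -/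

import Mathlib

open MeasureTheory ENNReal Filter

noncomputable section

/-- `L^p` norm (in `[0,∞]`) of an `ℝ≥0∞`-valued function. -/
def lpNormENN {α : Type*} [MeasurableSpace α] (μ : Measure α) (p : ℝ≥0∞)
    (f : α → ℝ≥0∞) : ℝ≥0∞ :=
  if p = ∞ then essSup f μ else (∫⁻ a, f a ^ p.toReal ∂μ) ^ (1 / p.toReal)

/-- Mixed `L^{p,q}` norm of an `ℝ≥0∞`-valued function on a product space. -/
def mixedNormENN {α β : Type*} [MeasurableSpace α] [MeasurableSpace β]
    (μ₁ : Measure α) (μ₂ : Measure β) (p q : ℝ≥0∞) (f : α × β → ℝ≥0∞) : ℝ≥0∞ :=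
  lpNormENN μ₂ q fun x₂ => lpNormENN μ₁ p fun x₁ => f (x₁, x₂)

/-- Mixed `L^{p,q}` norm of a complex-valued function on a product space. -/
def mixedNorm {α β : Type*} [MeasurableSpace α] [MeasurableSpace β]
    (μ₁ : Measure α) (μ₂ : Measure β) (p q : ℝ≥0∞) (f : α × β → ℂ) : ℝ≥0∞ :=
  mixedNormENN μ₁ μ₂ p q fun x => (‖f x‖₊ : ℝ≥0∞)

/-- The Schur constant `C₁(K)`. -/
def schurC1 {X Y : Type*} [MeasurableSpace X] [MeasurableSpace Y]
    (μ : Measure X) (ν : Measure Y) (K : X × Y → ℝ≥0∞) : ℝ≥0∞ :=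
  essSup (fun x => ∫⁻ y, K (x, y) ∂ν) μ

/-- The Schur constant `C₂(K)`. -/
def schurC2 {X Y : Type*} [MeasurableSpace X] [MeasurableSpace Y]
    (μ : Measure X) (ν : Measure Y) (K : X × Y → ℝ≥0∞) : ℝ≥0∞ :=
  essSup (fun y => ∫⁻ x, K (x, y) ∂μ) ν

/-- The Schur constant `C₃(K)`. -/
def schurC3 {X₁ X₂ Y₁ Y₂ : Type*} [MeasurableSpace X₁] [MeasurableSpace X₂]
    [MeasurableSpace Y₁] [MeasurableSpace Y₂]
    (μ₁ : Measure X₁) (μ₂ : Measure X₂) (ν₁ : Measure Y₁) (ν₂ : Measure Y₂)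
    (K : (X₁ × X₂) × (Y₁ × Y₂) → ℝ≥0∞) : ℝ≥0∞ :=
  essSup (fun x₂ =>
    ∫⁻ y₂, essSup (fun y₁ => ∫⁻ x₁, K ((x₁, x₂), (y₁, y₂)) ∂μ₁) ν₁ ∂ν₂) μ₂

/-- The Schur constant `C₄(K)`. -/
def schurC4 {X₁ X₂ Y₁ Y₂ : Type*} [MeasurableSpace X₁] [MeasurableSpace X₂]
    [MeasurableSpace Y₁] [MeasurableSpace Y₂]
    (μ₁ : Measure X₁) (μ₂ : Measure X₂) (ν₁ : Measure Y₁) (ν₂ : Measure Y₂)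
    (K : (X₁ × X₂) × (Y₁ × Y₂) → ℝ≥0∞) : ℝ≥0∞ :=
  essSup (fun y₂ =>
    ∫⁻ x₂, essSup (fun x₁ => ∫⁻ y₁, K ((x₁, x₂), (y₁, y₂)) ∂ν₁) μ₁ ∂μ₂) ν₂

/-- The kernel norm `‖K‖_{𝒜(U,V)}`. -/
def normA {U V : Type*} [MeasurableSpace U] [MeasurableSpace V]
    (lam : Measure U) (kap : Measure V) (K : U × V → ℝ≥0∞) : ℝ≥0∞ :=
  max (essSup (fun u => ∫⁻ v, K (u, v) ∂kap) lam)
      (essSup (fun v => ∫⁻ u, K (u, v) ∂lam) kap)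

/-- The kernel norm `‖K‖_{𝓑(X,Y)}` for an `ℝ≥0∞`-valued kernel. -/
def normB {X₁ X₂ Y₁ Y₂ : Type*} [MeasurableSpace X₁] [MeasurableSpace X₂]
    [MeasurableSpace Y₁] [MeasurableSpace Y₂]
    (μ₁ : Measure X₁) (μ₂ : Measure X₂) (ν₁ : Measure Y₁) (ν₂ : Measure Y₂)
    (K : (X₁ × X₂) × (Y₁ × Y₂) → ℝ≥0∞) : ℝ≥0∞ :=
  normA μ₂ ν₂ fun s => normA μ₁ ν₁ fun t => K ((t.1, s.1), (t.2, s.2))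

/-- The weighted kernel norm `‖K‖_{𝓑_m(X,Y)}` for an `ℝ≥0∞`-valued kernel. -/
def normBmENN {X₁ X₂ Y₁ Y₂ : Type*} [MeasurableSpace X₁] [MeasurableSpace X₂]
    [MeasurableSpace Y₁] [MeasurableSpace Y₂]
    (μ₁ : Measure X₁) (μ₂ : Measure X₂) (ν₁ : Measure Y₁) (ν₂ : Measure Y₂)
    (m : (X₁ × X₂) × (Y₁ × Y₂) → ℝ) (K : (X₁ × X₂) × (Y₁ × Y₂) → ℝ≥0∞) : ℝ≥0∞ :=
  normB μ₁ μ₂ ν₁ ν₂ fun z => ENNReal.ofReal (m z) * K z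

/-- The weighted kernel norm `‖K‖_{𝓑_m(X,Y)}` for a complex-valued kernel. -/
def normBm {X₁ X₂ Y₁ Y₂ : Type*} [MeasurableSpace X₁] [MeasurableSpace X₂]
    [MeasurableSpace Y₁] [MeasurableSpace Y₂]
    (μ₁ : Measure X₁) (μ₂ : Measure X₂) (ν₁ : Measure Y₁) (ν₂ : Measure Y₂)
    (m : (X₁ × X₂) × (Y₁ × Y₂) → ℝ) (K : (X₁ × X₂) × (Y₁ × Y₂) → ℂ) : ℝ≥0∞ :=
  normBmENN μ₁ μ₂ ν₁ ν₂ m fun z => (‖K z‖₊ : ℝ≥0∞)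

/-- The norm of the space `𝒢 = L¹ ∩ L^∞ ∩ L^{1,∞} ∩ L^{∞,1}`. -/
def Gnorm {α β : Type*} [MeasurableSpace α] [MeasurableSpace β]
    (μ₁ : Measure α) (μ₂ : Measure β) (f : α × β → ℂ) : ℝ≥0∞ :=
  max (max (eLpNorm f 1 (μ₁.prod μ₂)) (eLpNorm f ∞ (μ₁.prod μ₂)))
      (max (mixedNorm μ₁ μ₂ 1 ∞ f) (mixedNorm μ₁ μ₂ ∞ 1 f))

/-- The norm of the sum space `𝓗 = L¹ + L^∞ + L^{1,∞} + L^{∞,1}`. -/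
def Hnorm {α β : Type*} [MeasurableSpace α] [MeasurableSpace β]
    (μ₁ : Measure α) (μ₂ : Measure β) (f : α × β → ℂ) : ℝ≥0∞ :=
  ⨅ (g : (α × β → ℂ) × (α × β → ℂ) × (α × β → ℂ) × (α × β → ℂ))
    (_ : Measurable g.1 ∧ Measurable g.2.1 ∧ Measurable g.2.2.1 ∧ Measurable g.2.2.2 ∧
      f = g.1 + g.2.1 + g.2.2.1 + g.2.2.2),
    eLpNorm g.1 1 (μ₁.prod μ₂) + eLpNorm g.2.1 ∞ (μ₁.prod μ₂) +
      mixedNorm μ₁ μ₂ 1 ∞ g.2.2.1 + mixedNorm μ₁ μ₂ ∞ 1 g.2.2.2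

/-- The functional `ρ(f) = inf { ‖g‖_∞ + ‖h‖_1 : f = g + h }`. -/
def rho {α : Type*} [MeasurableSpace α] (μ : Measure α) (f : α → ℝ≥0∞) : ℝ≥0∞ :=
  ⨅ (gh : (α → ℝ≥0∞) × (α → ℝ≥0∞))
    (_ : Measurable gh.1 ∧ Measurable gh.2 ∧ f = gh.1 + gh.2),
    essSup gh.1 μ + ∫⁻ x, gh.2 x ∂μ

/-!
Since `ℝ≥0∞` is countably generated, all sections `F (θ, ·)` are measurable for one countably
generated sub-σ-algebra `m ≤ ℬ`, which can be enlarged by the spanning sets of `μ` so that `μ`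
stays σ-finite on `m`. A σ-finite measure on a countably generated σ-algebra is separable: a
countable family `𝒜` approximates every set of finite measure. Given `c < c' < ess sup G`, the set
`{c' < G}` contains some `s` with `0 < μ s < ∞`, and every `t ∈ 𝒜` close enough to `s` satisfies
`c μ(t) < c' μ(s ∩ t) ≤ ∫_t G`, so the average of `G` over `t` exceeds `c`. The `t ∈ 𝒜` of finite
positive measure are the sets `M n`; measurability in `θ` then follows from Tonelli.
-/

open Set MeasurableSpace Topology symmDiff

lemma MeasurableSpace.prod_mono_right {Θ Λ : Type*} (mΘ : MeasurableSpace Θ)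
    {m m' : MeasurableSpace Λ} (h : m ≤ m') : mΘ.prod m ≤ mΘ.prod m' :=
  sup_le_sup_left (comap_mono h) _

section CountableFactor

variable {Θ Λ : Type*} [mΘ : MeasurableSpace Θ] [mΛ : MeasurableSpace Λ]

lemma MeasurableSet.exists_countable_generateFrom_prod {S : Set (Θ × Λ)} (hS : MeasurableSet S) :
    ∃ C : Set (Set Λ), C.Countable ∧ (∀ c ∈ C, MeasurableSet c) ∧
      MeasurableSet[mΘ.prod (generateFrom C)] S := by
  rw [← generateFrom_prod] at hS
  induction S, hS using generateFrom_induction with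
  | hC _ hS =>
    obtain ⟨a, ha, b, hb, rfl⟩ := hS
    exact ⟨{b}, countable_singleton b, by simpa using hb,
      @MeasurableSet.prod _ _ mΘ (generateFrom {b}) _ _ ha (measurableSet_generateFrom rfl)⟩
  | empty => exact ⟨∅, countable_empty, by simp, @MeasurableSet.empty _ (mΘ.prod _)⟩
  | compl _ _ ih =>
    obtain ⟨C, hCc, hCm, hS⟩ := ih
    exact ⟨C, hCc, hCm, hS.compl⟩
  | iUnion S _ ih =>
    choose C hCc hCm hS using ih
    refine ⟨⋃ n, C n, countable_iUnion hCc, fun c hc => ?_, MeasurableSet.iUnion fun n => ?_⟩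
    · obtain ⟨n, hn⟩ := mem_iUnion.1 hc
      exact hCm n c hn
    exact prod_mono_right mΘ (generateFrom_mono (subset_iUnion C n)) _ (hS n)

lemma Measurable.exists_countable_generateFrom_prod {β : Type*} [MeasurableSpace β]
    [CountablyGenerated β] {F : Θ × Λ → β} (hF : Measurable F) :
    ∃ C : Set (Set Λ), C.Countable ∧ (∀ c ∈ C, MeasurableSet c) ∧
      Measurable[mΘ.prod (generateFrom C)] F := by
  have : Countable (countableGeneratingSet β) := countable_countableGeneratingSet.to_subtype
  have h (s : countableGeneratingSet β) :=
    (hF (measurableSet_countableGeneratingSet s.2)).exists_countable_generateFrom_prod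
  choose C hCc hCm hS using h
  refine ⟨⋃ s, C s, countable_iUnion hCc, fun c hc => ?_, ?_⟩
  · obtain ⟨s, hs⟩ := mem_iUnion.1 hc
    exact hCm s c hs
  have hFC : Measurable[mΘ.prod (generateFrom (⋃ s, C s)), generateFrom (countableGeneratingSet β)]
      F := Measurable.of_le_map <| generateFrom_le fun s hs =>
    prod_mono_right mΘ (generateFrom_mono (subset_iUnion C ⟨s, hs⟩)) _ (hS ⟨s, hs⟩)
  exact hFC.mono le_rfl generateFrom_countableGeneratingSet.ge

end CountableFactor

section EssSup

variable {X : Type*} [mX : MeasurableSpace X] {μ : Measure X}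

lemma MeasureTheory.Measure.MeasureDense.exists_seq_tendsto_measure_symmDiff {𝒜 : Set (Set X)}
    (h𝒜 : μ.MeasureDense 𝒜) {s : Set X} (hs : MeasurableSet s) (hμs : μ s ≠ ∞) :
    ∃ t : ℕ → Set X, (∀ n, t n ∈ 𝒜) ∧ Tendsto (fun n => μ (s ∆ t n)) atTop (𝓝 0) := by
  choose t ht hst using fun n : ℕ => h𝒜.approx s hs hμs (1 / (n + 1)) Nat.one_div_pos_of_nat
  refine ⟨t, ht, tendsto_of_tendsto_of_tendsto_of_le_of_le tendsto_const_nhds ?_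
    (fun _ => zero_le) fun n => (hst n).le⟩
  simpa using ENNReal.tendsto_ofReal tendsto_one_div_add_atTop_nhds_zero_nat

lemma measure_setOf_lt_ne_zero_of_lt_essSup {f : X → ℝ≥0∞} {c : ℝ≥0∞} (hc : c < essSup f μ) :
    μ {x | c < f x} ≠ 0 := by
  intro h
  refine hc.not_ge (essSup_le_of_ae_le c (ae_iff.2 ?_))
  simpa using h

lemma MeasureTheory.Measure.MeasureDense.exists_lt_setLAverage [SigmaFinite μ] {𝒜 : Set (Set X)}
    (h𝒜 : μ.MeasureDense 𝒜) {f : X → ℝ≥0∞} (hf : Measurable f) {c : ℝ≥0∞}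
    (hc : c < essSup f μ) :
    ∃ t ∈ 𝒜, 0 < μ t ∧ μ t < ∞ ∧ c < ⨍⁻ x in t, f x ∂μ := by
  obtain ⟨c', hcc', hc'⟩ := exists_between hc
  obtain ⟨s, hs, hsf, hμs, hμs_top⟩ := Measure.exists_subset_measure_lt_top
    (hf measurableSet_Ioi) (measure_setOf_lt_ne_zero_of_lt_essSup hc').bot_lt
  obtain ⟨t, ht𝒜, hst⟩ := h𝒜.exists_seq_tendsto_measure_symmDiff hs hμs_top.ne
  have hμt (n : ℕ) : μ (t n) ≤ μ s + μ (s ∆ t n) :=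
    (measure_le_inter_add_sdiff μ (t n) s).trans <| add_le_add
      (measure_mono inter_subset_right) (measure_mono subset_union_right)
  have hint (n : ℕ) : c' * (μ s - μ (s ∆ t n)) ≤ ∫⁻ x in t n, f x ∂μ := by
    have : μ s - μ (s ∆ t n) ≤ μ (s ∩ t n) := tsub_le_iff_right.2 <|
      (measure_le_inter_add_sdiff μ s (t n)).trans <| by gcongr; exact subset_union_left
    calc c' * (μ s - μ (s ∆ t n)) ≤ ∫⁻ _ in s ∩ t n, c' ∂μ := by
          rw [setLIntegral_const]; gcongr
      _ ≤ ∫⁻ x in s ∩ t n, f x ∂μ :=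
          setLIntegral_mono hf fun x hx => (hsf hx.1 : c' < f x).le
      _ ≤ ∫⁻ x in t n, f x ∂μ := lintegral_mono_set inter_subset_right
  have hc'_top : c' ≠ ∞ := (hc'.trans_le le_top).ne
  have hlow : Tendsto (fun n => c * (μ s + μ (s ∆ t n))) atTop (𝓝 (c * μ s)) :=
    ENNReal.Tendsto.const_mul (by simpa using tendsto_const_nhds.add hst)
      (.inr (hcc'.trans_le le_top).ne)
  have hhigh : Tendsto (fun n => c' * (μ s - μ (s ∆ t n))) atTop (𝓝 (c' * μ s)) :=
    ENNReal.Tendsto.const_mul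
      (by simpa using ENNReal.Tendsto.sub tendsto_const_nhds hst (.inl hμs_top.ne)) (.inr hc'_top)
  have hlim : ∀ᶠ n in atTop,
      c * (μ s + μ (s ∆ t n)) < c' * (μ s - μ (s ∆ t n)) ∧ μ (s ∆ t n) < ∞ :=
    (hlow.eventually_lt hhigh (ENNReal.mul_lt_mul_left hμs.ne' hμs_top.ne hcc')).and
      (hst.eventually_lt_const zero_lt_top)
  obtain ⟨n, hlt, hfin⟩ := hlim.exists
  have hmul : c * μ (t n) < ∫⁻ x in t n, f x ∂μ :=
    (mul_le_mul_right (hμt n) c).trans_lt (hlt.trans_le (hint n))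
  have ht0 : μ (t n) ≠ 0 := fun h => by simp [Measure.restrict_eq_zero.2 h] at hmul
  have ht_top : μ (t n) ≠ ∞ := ((hμt n).trans_lt (add_lt_top.2 ⟨hμs_top, hfin⟩)).ne
  refine ⟨t n, ht𝒜 n, pos_iff_ne_zero.2 ht0, ht_top.lt_top, ?_⟩
  rwa [setLAverage_eq, ENNReal.lt_div_iff_mul_lt (.inl ht0) (.inl ht_top)]

theorem exists_seq_essSup_eq_iSup_setLAverage [CountablyGenerated X] [SigmaFinite μ]
    (hμ : μ ≠ 0) :
    ∃ M : ℕ → Set X, (∀ n, MeasurableSet (M n) ∧ 0 < μ (M n) ∧ μ (M n) < ∞) ∧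
      ∀ f : X → ℝ≥0∞, Measurable f → essSup f μ = ⨆ n, ⨍⁻ x in M n, f x ∂μ := by
  obtain ⟨𝒜, h𝒜c, h𝒜⟩ := exists_countable_measureDense μ
  have h𝒜' : {t ∈ 𝒜 | 0 < μ t ∧ μ t < ∞}.Nonempty := by
    obtain ⟨t, ht, ht0, ht_top, -⟩ := h𝒜.exists_lt_setLAverage (f := fun _ => 1)
      measurable_const (c := 0) (by simp [essSup_const _ hμ])
    exact ⟨t, ht, ht0, ht_top⟩
  obtain ⟨M, hM⟩ := (h𝒜c.mono (sep_subset _ _)).exists_eq_range h𝒜'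
  have hM𝒜 (n : ℕ) := (Set.ext_iff.1 hM (M n)).2 (mem_range_self n)
  refine ⟨M, fun n => ⟨h𝒜.measurable _ (hM𝒜 n).1, (hM𝒜 n).2⟩, fun f hf => ?_⟩
  refine le_antisymm (le_of_forall_lt fun c hc => ?_) (iSup_le fun n => setLAverage_le_essSup _ _)
  obtain ⟨t, ht, ht0, ht_top, hct⟩ := h𝒜.exists_lt_setLAverage hf hc
  obtain ⟨n, rfl⟩ : t ∈ range M := (Set.ext_iff.1 hM t).1 ⟨ht, ht0, ht_top⟩
  exact hct.trans_le (le_iSup (fun n => ⨍⁻ x in M n, f x ∂μ) n)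

lemma setLAverage_eq_lintegral_mul_indicator {f : X → ℝ≥0∞} (hf : Measurable f) {s : Set X}
    (hs : MeasurableSet s) :
    ⨍⁻ x in s, f x ∂μ = ∫⁻ x, f x * s.indicator (fun _ => (μ s)⁻¹) x ∂μ := by
  simp_rw [← indicator_mul_right, lintegral_indicator hs, lintegral_mul_const _ hf,
    setLAverage_eq, div_eq_mul_inv]

end EssSup

section Trim

variable {X : Type*} {m mX : MeasurableSpace X} {μ : Measure[mX] X}

lemma setLAverage_trim (hm : m ≤ mX) {f : X → ℝ≥0∞} (hf : Measurable[m] f) {s : Set X}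
    (hs : MeasurableSet[m] s) :
    ⨍⁻ x in s, f x ∂μ.trim hm = ⨍⁻ x in s, f x ∂μ := by
  rw [setLAverage_eq, setLAverage_eq, setLIntegral_trim hm hf hs, trim_measurableSet_eq hm hs]

lemma sigmaFinite_trim_of_measurableSet_spanningSets [SigmaFinite μ] (hm : m ≤ mX)
    (h : ∀ n, MeasurableSet[m] (spanningSets μ n)) : SigmaFinite (μ.trim hm) :=
  ⟨⟨{ set := spanningSets μ
      set_mem := fun _ => mem_univ _
      finite := fun n => (trim_measurableSet_eq hm (h n)).trans_lt (measure_spanningSets_lt_top μ n)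
      spanning := iUnion_spanningSets μ }⟩⟩

theorem exists_seq_essSup_eq_iSup_lintegral_mul_indicator (hm : m ≤ mX)
    [@CountablyGenerated X m] [SigmaFinite (μ.trim hm)] (hμ : μ ≠ 0) :
    ∃ M : ℕ → Set X, (∀ n, MeasurableSet[mX] (M n) ∧ 0 < μ (M n) ∧ μ (M n) < ∞) ∧
      ∀ f : X → ℝ≥0∞, Measurable[m] f →
        essSup f μ = ⨆ n, ∫⁻ x, f x * (M n).indicator (fun _ => (μ (M n))⁻¹) x ∂μ := by
  have hμm : μ.trim hm ≠ 0 := by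
    rwa [← Measure.measure_univ_ne_zero, trim_measurableSet_eq hm MeasurableSet.univ,
      Measure.measure_univ_ne_zero]
  obtain ⟨M, hM, hsup⟩ := exists_seq_essSup_eq_iSup_setLAverage (mX := m) hμm
  have hMμ (n : ℕ) : MeasurableSet[mX] (M n) ∧ 0 < μ (M n) ∧ μ (M n) < ∞ := by
    have hμM := (hM n).2
    rw [trim_measurableSet_eq hm (hM n).1] at hμM
    exact ⟨hm _ (hM n).1, hμM⟩
  refine ⟨M, hMμ, fun f hf => ?_⟩
  simp_rw [← essSup_trim hm hf, hsup f hf, setLAverage_trim hm hf (hM _).1,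
    setLAverage_eq_lintegral_mul_indicator (mX := mX) (hf.mono hm le_rfl) (hMμ _).1]

end Trim

lemma Measurable.exists_countable_generateFrom_sections {Θ Λ β : Type*} [mΘ : MeasurableSpace Θ]
    [mΛ : MeasurableSpace Λ] [MeasurableSpace β] [CountablyGenerated β] {F : Θ × Λ → β}
    (hF : Measurable F) (μ : Measure Λ) [SigmaFinite μ] :
    ∃ C : Set (Set Λ), C.Countable ∧ ∃ hC : generateFrom C ≤ mΛ, SigmaFinite (μ.trim hC) ∧
      ∀ θ, Measurable[generateFrom C] fun l => F (θ, l) := by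
  obtain ⟨C, hCc, hCm, hFC⟩ := hF.exists_countable_generateFrom_prod
  have hC : generateFrom (C ∪ range (spanningSets μ)) ≤ mΛ := generateFrom_le <| by
    rintro _ (hc | ⟨n, rfl⟩)
    exacts [hCm _ hc, measurableSet_spanningSets μ n]
  refine ⟨C ∪ range (spanningSets μ), hCc.union (countable_range _), hC,
    sigmaFinite_trim_of_measurableSet_spanningSets hC fun n =>
      measurableSet_generateFrom (Or.inr ⟨n, rfl⟩), fun θ => ?_⟩
  exact (hFC.mono (prod_mono_right mΘ (generateFrom_mono subset_union_left)) le_rfl).comp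
    measurable_prodMk_left

/-- Countable duality characterization of the essential supremum
(Lemma `lem:CountableLInfinityCharacterization`). -/
theorem countable_essSup_characterization
    {Θ Λ : Type*} [MeasurableSpace Θ] [MeasurableSpace Λ]
    (μ : Measure Λ) [SigmaFinite μ] (hμ : μ Set.univ ≠ 0)
    (F : Θ × Λ → ℝ≥0∞) (hF : Measurable F) :
    (∃ M : ℕ → Set Λ,
      (∀ n, MeasurableSet (M n) ∧ 0 < μ (M n) ∧ μ (M n) < ∞) ∧
      ∀ θ : Θ, essSup (fun l => F (θ, l)) μ =
        ⨆ n : ℕ, ∫⁻ l, F (θ, l) * (M n).indicator (fun _ => (μ (M n))⁻¹) l ∂μ) ∧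
    Measurable fun θ => essSup (fun l => F (θ, l)) μ := by
  obtain ⟨C, hCc, hC, _, hsec⟩ := hF.exists_countable_generateFrom_sections μ
  have := @CountablyGenerated.mk Λ (generateFrom C) ⟨C, hCc, rfl⟩
  obtain ⟨M, hM, hsup⟩ :=
    exists_seq_essSup_eq_iSup_lintegral_mul_indicator hC (Measure.measure_univ_ne_zero.1 hμ)
  have hchar (θ : Θ) := hsup _ (hsec θ)
  refine ⟨⟨M, hM, hchar⟩, ?_⟩
  simp_rw [hchar]
  exact .iSup fun n => Measurable.lintegral_prod_right
    (hF.mul ((measurable_const.indicator (hM n).1).comp measurable_snd))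

end
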